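/- arXiv:1706.06454 — 6 statements merged into one kernel-verified Lean document; each statement's English description precedes it below -/
import Mathlib

section
/- The Lebesgue measure of a prolate hyperspheroid in R^n with focal points x_start and x_goal, defined as the set of points x with ||x - x_start|| + ||x_goal - x|| < c, where c > c_min := ||x_goal - x_start||, equals c·(c² - c_min²)^((n-1)/2)·ζ_n / 2^n, where ζ_n = π^(n/2)/Γ(n/2 + 1) is the measure of the unit n-ball. -/
/-!
Translating the midpoint of the foci to the origin and rotating the focal axis onto the first
coordinate axis preserves volume. With `a = c / 2` and `b = √(c² - c_min²) / 2`, so that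
`a² - b² = (c_min / 2)²` is the squared half-distance of the foci, the spheroid then becomes the
ellipsoid `(y₀ / a)² + ∑_{i ≠ 0} (yᵢ / b)² < 1`, the image of the unit ball under
`diag(a, b, …, b)`, whose volume is `a bⁿ⁻¹ ζₙ`.
-/

open MeasureTheory Real

theorem add_lt_iff_pos_mul {s t c : ℝ} (hs : 0 ≤ s) (ht : 0 ≤ t) (hst : |s - t| < c) :
    s + t < c ↔ 0 < (c ^ 2 - (s + t) ^ 2) * (c ^ 2 - (s - t) ^ 2) := by
  have hdiff : 0 < c ^ 2 - (s - t) ^ 2 := sub_pos.2 (sq_lt_sq' (abs_lt.1 hst).1 (abs_lt.1 hst).2)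
  rw [mul_pos_iff_of_pos_right hdiff, sub_pos]
  exact (pow_lt_pow_iff_left₀ (add_nonneg hs ht) ((abs_nonneg _).trans hst.le) two_ne_zero).symm

section Spheroid

variable {E : Type*} [NormedAddCommGroup E]

def spheroid (d : E) (c : ℝ) : Set E := {y | ‖y + d‖ + ‖y - d‖ < c}

variable [NormedSpace ℝ E]

theorem preimage_add_midpoint_eq_spheroid (xs xg : E) (c : ℝ) :
    (· + midpoint ℝ xs xg) ⁻¹' {x | dist x xs + dist xg x < c} =
      spheroid ((2 : ℝ)⁻¹ • (xg - xs)) c := by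
  ext y
  simp only [spheroid, Set.mem_preimage, Set.mem_ofPred_eq, dist_eq_norm, ← norm_neg (xg - _),
    midpoint_eq_smul_add, invOf_eq_inv]
  congr! 3 <;> module

theorem preimage_linearIsometryEquiv_spheroid (R : E ≃ₗᵢ[ℝ] E) (d : E) (c : ℝ) :
    R ⁻¹' spheroid (R d) c = spheroid d c := by
  ext y
  simp only [spheroid, Set.mem_preimage, Set.mem_ofPred_eq, ← map_add, ← map_sub,
    LinearIsometryEquiv.norm_map]

end Spheroid

section InnerProductSpace

variable {E : Type*} [NormedAddCommGroup E] [InnerProductSpace ℝ E]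

/- With `s = ‖y + d‖` and `t = ‖y - d‖`, the product in `add_lt_iff_pos_mul` is a polynomial
in `s² + t² = 2 (‖y‖² + ‖d‖²)` and `s² - t² = 4 ⟪d, y⟫`. -/
theorem mem_spheroid_iff {d y : E} {c : ℝ} (hd : 2 * ‖d‖ < c) :
    y ∈ spheroid d c ↔
      c ^ 2 * ‖y‖ ^ 2 - 4 * inner ℝ d y ^ 2 < c ^ 2 * (c ^ 2 / 4 - ‖d‖ ^ 2) := by
  have hfoci : |‖y + d‖ - ‖y - d‖| < c := calc
    |‖y + d‖ - ‖y - d‖| ≤ ‖(y + d) - (y - d)‖ := abs_norm_sub_norm_le _ _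
    _ = ‖d + d‖ := by abel_nf
    _ ≤ 2 * ‖d‖ := by linarith [norm_add_le d d]
    _ < c := hd
  have hprod : ∀ s t : ℝ, (c ^ 2 - (s + t) ^ 2) * (c ^ 2 - (s - t) ^ 2) =
      c ^ 4 - 2 * c ^ 2 * (s ^ 2 + t ^ 2) + (s ^ 2 - t ^ 2) ^ 2 := fun s t => by ring
  rw [spheroid, Set.mem_ofPred_eq, add_lt_iff_pos_mul (norm_nonneg _) (norm_nonneg _) hfoci,
    hprod, norm_add_sq_real, norm_sub_sq_real, real_inner_comm]
  constructor <;> intro h <;> linarith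

theorem volume_spheroid_eq_of_norm_eq [FiniteDimensional ℝ E] [MeasurableSpace E] [BorelSpace E]
    {d v : E} (h : ‖d‖ = ‖v‖) (c : ℝ) :
    volume (spheroid d c) = volume (spheroid v c) := by
  set R := Submodule.reflection (ℝ ∙ (d - v))ᗮ
  have hR : R d = v := Submodule.reflection_sub h
  rw [← hR, ← preimage_linearIsometryEquiv_spheroid R d c]
  exact R.measurePreserving.measure_preimage_equiv (f := R.toMeasurableEquiv) _

end InnerProductSpace

theorem EuclideanSpace.volume_setOf_sum_div_sq_lt_one {ι : Type*} [Fintype ι] {w : ι → ℝ}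
    (hw : ∀ i, 0 < w i) :
    volume {y : EuclideanSpace ℝ ι | ∑ i, (y i / w i) ^ 2 < 1} =
      ENNReal.ofReal (∏ i, w i) * volume (Metric.ball (0 : EuclideanSpace ℝ ι) 1) := by
  classical
  set L := Matrix.toLpLin 2 2 (Matrix.diagonal fun i => (w i)⁻¹)
  have hL : ∀ y i, L y i = y i / w i := fun y i => by
    simp [L, Matrix.toLpLin_apply, Matrix.mulVec_diagonal, div_eq_inv_mul]
  have hdet : LinearMap.det L = ∏ i, (w i)⁻¹ := by
    simp only [L, Matrix.toLpLin_eq_toLin, LinearMap.det_toLin, Matrix.det_diagonal]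
  have hset :
      {y : EuclideanSpace ℝ ι | ∑ i, (y i / w i) ^ 2 < 1} = L ⁻¹' Metric.ball 0 1 := by
    ext y
    rw [Set.mem_preimage, mem_ball_zero_iff, ← sq_lt_one_iff₀ (norm_nonneg _),
      EuclideanSpace.real_norm_sq_eq]
    simp only [hL, Set.mem_ofPred_eq]
  rw [hset, Measure.addHaar_preimage_linearMap _
      (by simp [hdet, Finset.prod_ne_zero_iff, (hw _).ne']),
    hdet, ← Finset.prod_inv_distrib]
  simp_rw [inv_inv, abs_of_pos (Finset.prod_pos fun i _ => hw i)]

theorem spheroid_smul_single_eq_setOf {m : ℕ} {a b f : ℝ} (ha : 0 < a) (hb : 0 < b)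
    (hab : a ^ 2 = b ^ 2 + f ^ 2) :
    spheroid (f • EuclideanSpace.single 0 1 : EuclideanSpace ℝ (Fin (m + 1))) (2 * a) =
      {y | ∑ i, (y i / (Fin.cons a fun _ => b : Fin (m + 1) → ℝ) i) ^ 2 < 1} := by
  have hf : 2 * ‖f • EuclideanSpace.single (0 : Fin (m + 1)) (1 : ℝ)‖ < 2 * a := by
    rw [norm_smul, PiLp.norm_single, norm_one, mul_one, Real.norm_eq_abs]
    nlinarith [abs_nonneg f, sq_abs f]
  ext y
  rw [mem_spheroid_iff hf, norm_smul, PiLp.norm_single, real_inner_smul_left,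
    EuclideanSpace.inner_single_left, EuclideanSpace.real_norm_sq_eq, Set.mem_ofPred_eq,
    Fin.sum_univ_succ, Fin.sum_univ_succ]
  simp only [Fin.cons_zero, Fin.cons_succ, div_pow, ← Finset.sum_div, norm_one, mul_one,
    Real.norm_eq_abs, sq_abs, map_one, one_mul]
  rw [div_add_div _ _ (by positivity) (by positivity), div_lt_one (by positivity)]
  constructor <;> intro h <;> nlinarith

theorem volume_spheroid_smul_single {m : ℕ} {a b f : ℝ} (ha : 0 < a) (hb : 0 < b)
    (hab : a ^ 2 = b ^ 2 + f ^ 2) :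
    volume (spheroid (f • EuclideanSpace.single 0 1 : EuclideanSpace ℝ (Fin (m + 1))) (2 * a)) =
      ENNReal.ofReal (a * b ^ m) *
        volume (Metric.ball (0 : EuclideanSpace ℝ (Fin (m + 1))) 1) := by
  rw [spheroid_smul_single_eq_setOf ha hb hab,
    EuclideanSpace.volume_setOf_sum_div_sq_lt_one (Fin.cases ha fun _ => hb), Fin.prod_univ_succ]
  simp

/-- The Lebesgue measure of the prolate hyperspheroid with focal points `xs`, `xg`
and transverse diameter `c > c_min = dist xg xs` is
`c (c² - c_min²)^((n-1)/2) ζ_n / 2^n` with `ζ_n = π^(n/2)/Γ(n/2+1)`. -/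
theorem phs_volume (n : ℕ) (hn : 1 ≤ n) (xs xg : EuclideanSpace ℝ (Fin n)) (c : ℝ)
    (hc : dist xg xs < c) :
    (volume {x : EuclideanSpace ℝ (Fin n) | dist x xs + dist xg x < c}).toReal =
      c * (c ^ 2 - (dist xg xs) ^ 2) ^ (((n : ℝ) - 1) / 2) *
        (Real.pi ^ ((n : ℝ) / 2) / Real.Gamma ((n : ℝ) / 2 + 1)) / 2 ^ n := by
  obtain ⟨m, rfl⟩ : ∃ m, n = m + 1 := ⟨n - 1, by omega⟩
  set D := dist xg xs
  have hc0 : 0 < c := dist_nonneg.trans_lt hc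
  have hX : 0 < c ^ 2 - D ^ 2 := by nlinarith [dist_nonneg (x := xg) (y := xs)]
  have hd : ‖(2 : ℝ)⁻¹ • (xg - xs)‖ =
      ‖(D / 2) • EuclideanSpace.single (0 : Fin (m + 1)) (1 : ℝ)‖ := by
    simp [norm_smul, D, dist_eq_norm, div_eq_inv_mul]
  have hvol : volume {x : EuclideanSpace ℝ (Fin (m + 1)) | dist x xs + dist xg x < c} =
      ENNReal.ofReal (c / 2 * (√(c ^ 2 - D ^ 2) / 2) ^ m) *
        volume (Metric.ball (0 : EuclideanSpace ℝ (Fin (m + 1))) 1) := by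
    rw [← measure_preimage_add_right _ (midpoint ℝ xs xg), preimage_add_midpoint_eq_spheroid,
      volume_spheroid_eq_of_norm_eq hd,
      ← volume_spheroid_smul_single (half_pos hc0) (by positivity),
      mul_div_cancel₀ _ two_ne_zero]
    rw [div_pow, div_pow, Real.sq_sqrt hX.le]
    ring
  rw [hvol, EuclideanSpace.volume_ball, Fintype.card_fin, ENNReal.ofReal_one, one_pow, one_mul,
    ENNReal.toReal_mul, ENNReal.toReal_ofReal (mul_nonneg (half_pos hc0).le (by positivity)),
    ENNReal.toReal_ofReal (by positivity), div_pow,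
    Real.rpow_div_two_eq_sqrt _ hX.le, Real.rpow_div_two_eq_sqrt _ pi_pos.le]
  push_cast
  rw [add_sub_cancel_right, Real.rpow_natCast, ← Nat.cast_succ, Real.rpow_natCast]
  field_simp
  ring
end

section
/- Consider the deterministic recursion c_{i+1} = (n·c_i² + c_min²)/((n+1)·c_i) with c_0 > c_min > 0 and n ≥ 2. Then the sequence (c_i) is strictly decreasing, converges to c_min, and the convergence is linear with rate (n-1)/(n+1): lim_{i→∞} (c_{i+1} - c_min)/(c_i - c_min) = (n-1)/(n+1). -/
open Filter Topology

/-!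
Write `f x = (a x² + m²) / ((a + 1) x)` for the step of the recursion. Two factorisations carry
everything:
`x - f x = (x - m)(x + m) / ((a + 1) x)` and `f x - m = (x - m) · (a x - m) / ((a + 1) x)`.
For `x > m > 0` and `a ≥ 1` both right-hand sides are positive, so the orbit decreases and stays
above `m`; its limit is a positive fixed point of `f`, which by the first identity is `m`. The
second identity makes the error ratio the continuous function `(a x - m) / ((a + 1) x)`, whose
value at `x = m` is `(a - 1) / (a + 1)`.
-/

noncomputable def informedStep (a m x : ℝ) : ℝ :=
  (a * x ^ 2 + m ^ 2) / ((a + 1) * x)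

section Step

variable {a m x : ℝ}

theorem sub_informedStep (ha : a + 1 ≠ 0) (hx : x ≠ 0) :
    x - informedStep a m x = (x - m) * (x + m) / ((a + 1) * x) := by
  unfold informedStep
  field_simp
  ring

theorem informedStep_sub (ha : a + 1 ≠ 0) (hx : x ≠ 0) :
    informedStep a m x - m = (x - m) * ((a * x - m) / ((a + 1) * x)) := by
  unfold informedStep
  field_simp
  ring

theorem informedStep_lt (ha : 0 < a + 1) (hm : 0 < m) (hx : m < x) :
    informedStep a m x < x := by
  have hx0 : 0 < x := hm.trans hx
  have h : 0 < x - informedStep a m x := by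
    rw [sub_informedStep ha.ne' hx0.ne']
    have := sub_pos.2 hx
    positivity
  linarith

theorem lt_informedStep (ha : 1 ≤ a) (hm : 0 < m) (hx : m < x) :
    m < informedStep a m x := by
  have hx0 : 0 < x := hm.trans hx
  have hax : 0 < a * x - m := by nlinarith
  have h : 0 < informedStep a m x - m := by
    rw [informedStep_sub (by linarith) hx0.ne']
    have := sub_pos.2 hx
    have : 0 < a + 1 := by linarith
    positivity
  linarith

theorem eq_of_informedStep_eq_self (ha : a + 1 ≠ 0) (hm : 0 < m) (hx : 0 < x)
    (hfix : informedStep a m x = x) : x = m := by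
  have h := sub_informedStep (m := m) ha hx.ne'
  rw [hfix, sub_self, eq_comm, div_eq_zero_iff, mul_eq_zero, mul_eq_zero] at h
  rcases h with (h | h) | h | h
  · linarith
  · linarith
  · exact absurd h ha
  · linarith

theorem continuousAt_informedStep (ha : a + 1 ≠ 0) (hx : x ≠ 0) :
    ContinuousAt (informedStep a m) x :=
  ContinuousAt.div (by fun_prop) (by fun_prop) (mul_ne_zero ha hx)

end Step

section Orbit

variable {a m : ℝ} {c : ℕ → ℝ} (hrec : ∀ i, c (i + 1) = informedStep a m (c i))
include hrec

theorem lt_orbit_informedStep (ha : 1 ≤ a) (hm : 0 < m) (h0 : m < c 0) (i : ℕ) : m < c i := by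
  induction i with
  | zero => exact h0
  | succ i ih => exact hrec i ▸ lt_informedStep ha hm ih

theorem strictAnti_orbit_informedStep (ha : 1 ≤ a) (hm : 0 < m) (h0 : m < c 0) :
    StrictAnti c :=
  strictAnti_nat_of_succ_lt fun i =>
    hrec i ▸ informedStep_lt (by linarith) hm (lt_orbit_informedStep hrec ha hm h0 i)

theorem tendsto_orbit_informedStep (ha : 1 ≤ a) (hm : 0 < m) (h0 : m < c 0) :
    Tendsto c atTop (𝓝 m) := by
  have hbound := lt_orbit_informedStep hrec ha hm h0
  have hbdd : BddBelow (Set.range c) := ⟨m, by rintro _ ⟨i, rfl⟩; exact (hbound i).le⟩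
  have hlim := tendsto_atTop_ciInf (strictAnti_orbit_informedStep hrec ha hm h0).antitone hbdd
  have hL : 0 < ⨅ i, c i := hm.trans_le (le_ciInf fun i => (hbound i).le)
  have hstep : Tendsto (fun i => c (i + 1)) atTop (𝓝 (informedStep a m (⨅ i, c i))) :=
    ((continuousAt_informedStep (by linarith) hL.ne').tendsto.comp hlim).congr
      fun i => (hrec i).symm
  have hfix := tendsto_nhds_unique hstep (hlim.comp (tendsto_add_atTop_nat 1))
  rwa [eq_of_informedStep_eq_self (by linarith) hm hL hfix] at hlim

theorem tendsto_error_ratio_orbit_informedStep (ha : 1 ≤ a) (hm : 0 < m) (h0 : m < c 0) :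
    Tendsto (fun i => (c (i + 1) - m) / (c i - m)) atTop (𝓝 ((a - 1) / (a + 1))) := by
  have hbound := lt_orbit_informedStep hrec ha hm h0
  have ha1 : a + 1 ≠ 0 := by linarith
  have hratio : ∀ i, (a * c i - m) / ((a + 1) * c i) = (c (i + 1) - m) / (c i - m) := fun i => by
    rw [hrec, informedStep_sub ha1 (hm.trans (hbound i)).ne',
      mul_div_cancel_left₀ _ (sub_pos.2 (hbound i)).ne']
  have hlim := tendsto_orbit_informedStep hrec ha hm h0
  have hval : (a * m - m) / ((a + 1) * m) = (a - 1) / (a + 1) := by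
    field_simp
  rw [← hval]
  exact (((tendsto_const_nhds.mul hlim).sub tendsto_const_nhds).div
    (tendsto_const_nhds.mul hlim) (mul_ne_zero ha1 hm.ne')).congr hratio

end Orbit

/-- The recursion `c_{i+1} = (n c_i² + c_min²)/((n+1) c_i)` with `c_0 > c_min > 0`, `n ≥ 2`,
is strictly decreasing, converges to `c_min`, and converges linearly with rate `(n-1)/(n+1)`. -/
theorem informed_recursion_linear (n : ℕ) (hn : 2 ≤ n) (cmin : ℝ) (hmin : 0 < cmin)
    (c : ℕ → ℝ) (h0 : cmin < c 0)
    (hrec : ∀ i, c (i + 1) = ((n : ℝ) * (c i) ^ 2 + cmin ^ 2) / (((n : ℝ) + 1) * c i)) :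
    StrictAnti c ∧ Tendsto c atTop (nhds cmin) ∧
      Tendsto (fun i => (c (i + 1) - cmin) / (c i - cmin)) atTop
        (nhds (((n : ℝ) - 1) / ((n : ℝ) + 1))) := by
  have hn1 : (1 : ℝ) ≤ n := by exact_mod_cast one_le_two.trans hn
  exact ⟨strictAnti_orbit_informedStep hrec hn1 hmin h0,
    tendsto_orbit_informedStep hrec hn1 hmin h0,
    tendsto_error_ratio_orbit_informedStep hrec hn1 hmin h0⟩
end

section
/- Let p ∈ (0,1] and define the recursion c_{i+1} = p·(n·c_i² + c_min²)/((n+1)·c_i) + (1-p)·c_i with c_0 > c_min > 0 and n ≥ 2 and p constant. Then c_i → c_min with linear convergence rate 1 - 2p/(n+1). -/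
open Filter

/-- With constant success probability `p ∈ (0,1]`, the recursion
`c_{i+1} = p (n c_i² + c_min²)/((n+1) c_i) + (1-p) c_i` converges to `c_min`
linearly with rate `1 - 2p/(n+1)`. -/
theorem probabilistic_recursion_linear (n : ℕ) (hn : 2 ≤ n) (cmin : ℝ) (hmin : 0 < cmin)
    (p : ℝ) (hp : p ∈ Set.Ioc (0 : ℝ) 1) (c : ℕ → ℝ) (h0 : cmin < c 0)
    (hrec : ∀ i, c (i + 1) =
      p * (((n : ℝ) * (c i) ^ 2 + cmin ^ 2) / (((n : ℝ) + 1) * c i)) + (1 - p) * c i) :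
    Tendsto c atTop (nhds cmin) ∧
      Tendsto (fun i => (c (i + 1) - cmin) / (c i - cmin)) atTop
        (nhds (1 - 2 * p / ((n : ℝ) + 1))) := by
  obtain ⟨hp0, hp1⟩ := hp
  have hn3 : (3:ℝ) ≤ (n:ℝ) + 1 := by
    have : (2:ℝ) ≤ (n:ℝ) := by exact_mod_cast hn
    linarith
  have hn1 : (0:ℝ) < (n:ℝ) + 1 := by linarith
  -- key identity
  have key : ∀ i, cmin < c i →
      c (i+1) - cmin = (c i - cmin) * (1 - p * (c i + cmin) / (((n:ℝ)+1) * c i)) := by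
    intro i hi
    have hc : c i ≠ 0 := ne_of_gt (lt_trans hmin hi)
    rw [hrec i]
    field_simp
    ring
  -- factor bounds
  have fac_pos : ∀ x : ℝ, cmin < x → 0 < 1 - p * (x + cmin) / (((n:ℝ)+1) * x) := by
    intro x hx
    have hx0 : 0 < x := lt_trans hmin hx
    have hdenom : 0 < ((n:ℝ)+1) * x := by positivity
    rw [sub_pos, div_lt_one hdenom]
    nlinarith
  have fac_le : ∀ x : ℝ, cmin < x →
      1 - p * (x + cmin) / (((n:ℝ)+1) * x) ≤ 1 - p / ((n:ℝ)+1) := by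
    intro x hx
    have hx0 : 0 < x := lt_trans hmin hx
    have hdenom : 0 < ((n:ℝ)+1) * x := by positivity
    have : p / ((n:ℝ)+1) ≤ p * (x + cmin) / (((n:ℝ)+1) * x) := by
      rw [div_le_div_iff₀ hn1 hdenom]
      nlinarith [mul_pos (mul_pos hp0 hmin) hn1]
    linarith
  set r : ℝ := 1 - p / ((n:ℝ)+1) with hr
  have hr0 : 0 ≤ r := by
    have : p / ((n:ℝ)+1) ≤ 1 := by
      rw [div_le_one hn1]; linarith
    rw [hr]; linarith
  have hr1 : r < 1 := by
    have : 0 < p / ((n:ℝ)+1) := by positivity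
    simp only [hr]; linarith
  -- positivity of errors
  have hpos : ∀ i, cmin < c i := by
    intro i
    induction i with
    | zero => exact h0
    | succ k ih =>
      have := key k ih
      have h1 := fac_pos (c k) ih
      nlinarith [this, h1, sub_pos.mpr ih]
  -- geometric bound
  have geo : ∀ i, c i - cmin ≤ (c 0 - cmin) * r ^ i := by
    intro i
    induction i with
    | zero => simp
    | succ k ih =>
      have hk := hpos k
      have he : 0 < c k - cmin := sub_pos.mpr hk
      calc c (k+1) - cmin = (c k - cmin) * (1 - p * (c k + cmin) / (((n:ℝ)+1) * c k)) :=
            key k hk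
        _ ≤ (c k - cmin) * r := by
            apply mul_le_mul_of_nonneg_left (fac_le (c k) hk) he.le
        _ ≤ ((c 0 - cmin) * r ^ k) * r := mul_le_mul_of_nonneg_right ih hr0
        _ = (c 0 - cmin) * r ^ (k+1) := by ring
  -- convergence of c
  have herr : Tendsto (fun i => c i - cmin) atTop (nhds 0) := by
    have hg : Tendsto (fun i => (c 0 - cmin) * r ^ i) atTop (nhds 0) := by
      have := tendsto_pow_atTop_nhds_zero_of_lt_one hr0 hr1
      simpa using this.const_mul (c 0 - cmin)
    exact squeeze_zero (fun i => (sub_pos.mpr (hpos i)).le) geo hg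
  have hc_tendsto : Tendsto c atTop (nhds cmin) := by
    have := herr.add_const cmin
    simpa using this
  refine ⟨hc_tendsto, ?_⟩
  -- the ratio equals the factor
  have hratio : ∀ i, (c (i + 1) - cmin) / (c i - cmin)
      = 1 - p * (c i + cmin) / (((n:ℝ)+1) * c i) := by
    intro i
    have he : c i - cmin ≠ 0 := ne_of_gt (sub_pos.mpr (hpos i))
    rw [key i (hpos i), mul_comm, mul_div_assoc, div_self he, mul_one]
  have hfac_tendsto : Tendsto (fun i => 1 - p * (c i + cmin) / (((n:ℝ)+1) * c i)) atTop
      (nhds (1 - 2 * p / ((n:ℝ)+1))) := by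
    have hnum : Tendsto (fun i => p * (c i + cmin)) atTop (nhds (p * (cmin + cmin))) :=
      ((hc_tendsto.add_const cmin).const_mul p)
    have hden : Tendsto (fun i => ((n:ℝ)+1) * c i) atTop (nhds (((n:ℝ)+1) * cmin)) :=
      hc_tendsto.const_mul _
    have hden_ne : ((n:ℝ)+1) * cmin ≠ 0 := by positivity
    have hdiv := hnum.div hden hden_ne
    have heq : p * (cmin + cmin) / (((n:ℝ)+1) * cmin) = 2 * p / ((n:ℝ)+1) := by
      field_simp
      ring
    rw [heq] at hdiv
    exact (tendsto_const_nhds.sub hdiv)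
  simp only [hratio]
  exact hfac_tendsto
end

section
/- Define the recursion c_{i+1} = p(c_i)·(n·c_i² + c_min²)/((n+1)·c_i) + (1 - p(c_i))·c_i where p(c) = c·(c² - c_min²)^((n-1)/2)·ζ_n / (2^n · λ) for a fixed λ > 0 large enough that p(c_0) ≤ 1, with c_0 > c_min and n ≥ 2. Then c_i → c_min and the convergence is sublinear: lim_{i→∞} (c_{i+1} - c_min)/(c_i - c_min) = 1. -/
/-!
In terms of the error, the recursion reads `c (i+1) - cmin = (c i - cmin) * (1 - q (c i))` with
`q x = p x * (x + cmin) / ((n + 1) * x)`. Since `p` is increasing on `[cmin, ∞)` and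
`p (c 0) ≤ 1`, `q` takes values in `(0, 1)` on `(cmin, c 0]`, so the sequence decreases and stays
above `cmin`; its limit is a fixed point of the recursion, which forces it to be `cmin`. The
error ratio is then `1 - q (c i) → 1 - q cmin = 1`, because `p cmin = 0` as soon as `n ≥ 2`.
-/

open Filter Real Set Topology

section ErrorRecursion

variable {a : ℝ} {q : ℝ → ℝ} {c : ℕ → ℝ}

theorem mem_Ioc_of_error_recursion (h0 : a < c 0) (hq : ∀ x ∈ Ioc a (c 0), q x ∈ Ioo 0 1)
    (hstep : ∀ i, c i ∈ Ioc a (c 0) → c (i + 1) - a = (c i - a) * (1 - q (c i))) (i : ℕ) :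
    c i ∈ Ioc a (c 0) := by
  induction i with
  | zero => exact ⟨h0, le_rfl⟩
  | succ k ih =>
    have hs := hstep k ih
    obtain ⟨hq0, hq1⟩ := hq _ ih
    have herr : 0 < c k - a := sub_pos.2 ih.1
    constructor
    · nlinarith [mul_pos herr (sub_pos.2 hq1)]
    · nlinarith [mul_pos herr hq0, ih.2]

theorem antitone_of_error_recursion (h0 : a < c 0) (hq : ∀ x ∈ Ioc a (c 0), q x ∈ Ioo 0 1)
    (hstep : ∀ i, c i ∈ Ioc a (c 0) → c (i + 1) - a = (c i - a) * (1 - q (c i))) :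
    Antitone c := by
  refine antitone_nat_of_succ_le fun i => ?_
  have hi := mem_Ioc_of_error_recursion h0 hq hstep i
  nlinarith [hstep i hi, mul_pos (sub_pos.2 hi.1) (hq _ hi).1]

/-- A limit `L` of the recursion is a fixed point, `(L - a) * q L = 0`, and `q L > 0` unless
`L = a`. -/
theorem tendsto_of_error_recursion (h0 : a < c 0) (hq : ∀ x ∈ Ioc a (c 0), q x ∈ Ioo 0 1)
    (hcont : ContinuousOn q (Icc a (c 0)))
    (hstep : ∀ i, c i ∈ Ioc a (c 0) → c (i + 1) - a = (c i - a) * (1 - q (c i))) :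
    Tendsto c atTop (𝓝 a) := by
  have hmem := mem_Ioc_of_error_recursion h0 hq hstep
  have hbdd : BddBelow (range c) := ⟨a, forall_mem_range.2 fun i => (hmem i).1.le⟩
  set L := ⨅ i, c i
  have hL : Tendsto c atTop (𝓝 L) :=
    tendsto_atTop_ciInf (antitone_of_error_recursion h0 hq hstep) hbdd
  have hLmem : L ∈ Icc a (c 0) :=
    isClosed_Icc.mem_of_tendsto hL (Eventually.of_forall fun i => Ioc_subset_Icc_self (hmem i))
  have hqL : Tendsto (fun i => q (c i)) atTop (𝓝 (q L)) :=
    (hcont L hLmem).tendsto.comp <| tendsto_nhdsWithin_iff.2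
      ⟨hL, Eventually.of_forall fun i => Ioc_subset_Icc_self (hmem i)⟩
  have hfix : L - a = (L - a) * (1 - q L) :=
    tendsto_nhds_unique ((hL.comp (tendsto_add_atTop_nat 1)).sub_const a) <|
      ((hL.sub_const a).mul (hqL.const_sub 1)).congr' <|
        Eventually.of_forall fun i => (hstep i (hmem i)).symm
  obtain hLa | hLa := hLmem.1.eq_or_lt
  · exact hLa ▸ hL
  · nlinarith [(hq L ⟨hLa, hLmem.2⟩).1]

theorem tendsto_error_ratio_of_error_recursion (h0 : a < c 0)
    (hq : ∀ x ∈ Ioc a (c 0), q x ∈ Ioo 0 1) (hcont : ContinuousOn q (Icc a (c 0)))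
    (hstep : ∀ i, c i ∈ Ioc a (c 0) → c (i + 1) - a = (c i - a) * (1 - q (c i))) :
    Tendsto (fun i => (c (i + 1) - a) / (c i - a)) atTop (𝓝 (1 - q a)) := by
  have hmem := mem_Ioc_of_error_recursion h0 hq hstep
  have hc := tendsto_of_error_recursion h0 hq hcont hstep
  have hqa : Tendsto (fun i => q (c i)) atTop (𝓝 (q a)) :=
    (hcont a (left_mem_Icc.2 h0.le)).tendsto.comp <| tendsto_nhdsWithin_iff.2
      ⟨hc, Eventually.of_forall fun i => Ioc_subset_Icc_self (hmem i)⟩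
  refine (hqa.const_sub 1).congr fun i => ?_
  rw [hstep i (hmem i), mul_div_cancel_left₀ _ (sub_pos.2 (hmem i).1).ne']

end ErrorRecursion

section ProlateVolume

variable {b e : ℝ}

theorem mul_rpow_sq_sub_sq_pos (hb : 0 ≤ b) {x : ℝ} (hx : b < x) :
    0 < x * (x ^ 2 - b ^ 2) ^ e :=
  mul_pos (hb.trans_lt hx) (rpow_pos_of_pos (by nlinarith) e)

theorem monotoneOn_mul_rpow_sq_sub_sq (hb : 0 ≤ b) (he : 0 ≤ e) :
    MonotoneOn (fun x => x * (x ^ 2 - b ^ 2) ^ e) (Ici b) := by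
  intro x (hx : b ≤ x) y _ hxy
  have hbx : 0 ≤ x ^ 2 - b ^ 2 := by nlinarith
  exact mul_le_mul hxy (rpow_le_rpow hbx (by nlinarith) he) (by positivity) (by linarith)

theorem continuous_mul_rpow_sq_sub_sq (he : 0 ≤ e) :
    Continuous fun x => x * (x ^ 2 - b ^ 2) ^ e :=
  continuous_id.mul ((continuous_rpow_const he).comp (by fun_prop))

end ProlateVolume

theorem add_div_mul_mem_Ioo {m b x : ℝ} (hm : 2 ≤ m) (hb : 0 ≤ b) (hx : b < x) :
    (x + b) / (m * x) ∈ Ioo 0 1 := by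
  have hx0 : 0 < x := hb.trans_lt hx
  exact ⟨by positivity, (div_lt_one (by positivity)).2 (by nlinarith)⟩

theorem mul_mem_Ioo_zero_one {s t : ℝ} (hs : s ∈ Ioc 0 1) (ht : t ∈ Ioo 0 1) :
    s * t ∈ Ioo 0 1 :=
  ⟨mul_pos hs.1 ht.1, mul_lt_one_of_nonneg_of_lt_one_right hs.2 ht.1.le ht.2⟩

theorem recursion_sub_eq {m P b x : ℝ} (hm : m + 1 ≠ 0) (hx : x ≠ 0) :
    P * ((m * x ^ 2 + b ^ 2) / ((m + 1) * x)) + (1 - P) * x - b =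
      (x - b) * (1 - P * ((x + b) / ((m + 1) * x))) := by
  field_simp
  ring

/-- With state-dependent success probability
`p(c) = c (c² - c_min²)^((n-1)/2) ζ_n / (2^n λ)` (uniform global sampling of a domain of
measure `λ`), the recursion `c_{i+1} = p(c_i) E(c_i) + (1 - p(c_i)) c_i` converges to `c_min`
sublinearly: the ratio of successive errors tends to `1`. -/
theorem global_sampling_recursion_sublinear (n : ℕ) (hn : 2 ≤ n) (cmin : ℝ) (hmin : 0 < cmin)
    (lam : ℝ) (hlam : 0 < lam) (p : ℝ → ℝ)
    (hp : ∀ x, p x = x * (x ^ 2 - cmin ^ 2) ^ (((n : ℝ) - 1) / 2) *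
        (Real.pi ^ ((n : ℝ) / 2) / Real.Gamma ((n : ℝ) / 2 + 1)) / (2 ^ n * lam))
    (c : ℕ → ℝ) (h0 : cmin < c 0) (hp0 : p (c 0) ≤ 1)
    (hrec : ∀ i, c (i + 1) =
      p (c i) * (((n : ℝ) * (c i) ^ 2 + cmin ^ 2) / (((n : ℝ) + 1) * c i)) +
        (1 - p (c i)) * c i) :
    Tendsto c atTop (nhds cmin) ∧
      Tendsto (fun i => (c (i + 1) - cmin) / (c i - cmin)) atTop (nhds 1) := by
  have hn' : (2 : ℝ) ≤ n := by exact_mod_cast hn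
  have he : 0 < ((n : ℝ) - 1) / 2 := by linarith
  obtain ⟨K, hK, rfl⟩ : ∃ K > 0,
      p = fun x => K * (x * (x ^ 2 - cmin ^ 2) ^ (((n : ℝ) - 1) / 2)) :=
    ⟨π ^ ((n : ℝ) / 2) / Gamma ((n : ℝ) / 2 + 1) / (2 ^ n * lam), by positivity,
      funext fun x => by rw [hp]; ring⟩
  set q := fun x => K * (x * (x ^ 2 - cmin ^ 2) ^ (((n : ℝ) - 1) / 2)) *
    ((x + cmin) / ((n + 1) * x))
  have hq : ∀ x ∈ Ioc cmin (c 0), q x ∈ Ioo 0 1 := fun x hx =>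
    mul_mem_Ioo_zero_one
      ⟨mul_pos hK (mul_rpow_sq_sub_sq_pos hmin.le hx.1), hp0.trans' <| mul_le_mul_of_nonneg_left
        (monotoneOn_mul_rpow_sq_sub_sq hmin.le he.le hx.1.le h0.le hx.2) hK.le⟩
      (add_div_mul_mem_Ioo (by linarith) hmin.le hx.1)
  have hcont : ContinuousOn q (Icc cmin (c 0)) :=
    ((continuous_mul_rpow_sq_sub_sq he.le).const_smul K).continuousOn.mul <|
      (continuousOn_id.add continuousOn_const).div (by fun_prop) fun x hx =>
        (mul_pos (by positivity) (hmin.trans_le hx.1)).ne'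
  have hstep : ∀ i, c i ∈ Ioc cmin (c 0) → c (i + 1) - cmin = (c i - cmin) * (1 - q (c i)) :=
    fun i hi => by rw [hrec, recursion_sub_eq (by positivity) (hmin.trans hi.1).ne']
  have hq0 : q cmin = 0 := by simp [q, zero_rpow he.ne']
  exact ⟨tendsto_of_error_recursion h0 hq hcont hstep,
    by simpa [hq0] using tendsto_error_ratio_of_error_recursion h0 hq hcont hstep⟩
end

section
/- Define the recursion c_{i+1} = p·(n·c_i² + c_min²)/((n+1)·c_i) + (1-p)·c_i with constant p = π^(n/2)/(2^n·Γ(n/2+1)), c_0 > c_min > 0, n ≥ 2. Then c_i → c_min linearly with rate ρ_n = 1 - π^(n/2)/((n+1)·2^(n-1)·Γ(n/2+1)), and ρ_n → 1 as n → ∞. -/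
open Filter Real

lemma one_le_Gamma_aux {x : ℝ} (hx : 2 ≤ x) : 1 ≤ Real.Gamma x := by
  have h := Real.Gamma_strictMonoOn_Ici.monotoneOn Set.self_mem_Ici (Set.mem_Ici.2 hx) hx
  simpa [Real.Gamma_two] using h

lemma sqrtpi_lt_two : Real.pi ^ ((1:ℝ)/2) < 2 := by
  rw [← Real.sqrt_eq_rpow]
  rw [show (2:ℝ) = Real.sqrt 4 by
    rw [show (4:ℝ) = 2^2 by norm_num, Real.sqrt_sq (by norm_num)]]
  exact Real.sqrt_lt_sqrt Real.pi_pos.le (by linarith [Real.pi_lt_d2])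

lemma pi_rpow_half_nat (m : ℕ) :
    Real.pi ^ ((m : ℝ)/2) = (Real.pi ^ ((1:ℝ)/2)) ^ m := by
  rw [← Real.rpow_natCast (Real.pi ^ ((1:ℝ)/2)) m, ← Real.rpow_mul Real.pi_pos.le]
  ring_nf

lemma rho_tendsto_one :
    Tendsto (fun m : ℕ => 1 - Real.pi ^ ((m : ℝ) / 2) /
        (((m : ℝ) + 1) * 2 ^ (m - 1) * Real.Gamma ((m : ℝ) / 2 + 1)))
      atTop (nhds 1) := by
  set s : ℝ := Real.pi ^ ((1:ℝ)/2) with hs_def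
  have hs0 : 0 < s := Real.rpow_pos_of_pos Real.pi_pos _
  have hs2 : s < 2 := sqrtpi_lt_two
  have ht : Tendsto (fun m : ℕ => Real.pi ^ ((m : ℝ) / 2) /
      (((m : ℝ) + 1) * 2 ^ (m - 1) * Real.Gamma ((m : ℝ) / 2 + 1))) atTop (nhds 0) := by
    have hgeo : Tendsto (fun m : ℕ => 2 * (s/2) ^ m) atTop (nhds 0) := by
      have := tendsto_pow_atTop_nhds_zero_of_lt_one
        (by positivity : (0:ℝ) ≤ s/2) (by linarith : s/2 < 1)
      simpa using this.const_mul 2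
    apply squeeze_zero' ?_ ?_ hgeo
    · filter_upwards with m
      have hΓ : 0 < Real.Gamma ((m : ℝ)/2 + 1) := Real.Gamma_pos_of_pos (by positivity)
      exact div_nonneg (Real.rpow_pos_of_pos Real.pi_pos _).le (by positivity)
    · filter_upwards [eventually_ge_atTop 2] with m hm
      have hΓ : 1 ≤ Real.Gamma ((m : ℝ)/2 + 1) := by
        apply one_le_Gamma_aux
        have : (2:ℝ) ≤ (m:ℝ) := by exact_mod_cast hm
        linarith
      have hΓ0 : 0 < Real.Gamma ((m : ℝ)/2 + 1) := by linarith
      have hm1 : (1:ℝ) ≤ (m:ℝ) + 1 := by linarith [(Nat.cast_nonneg m : (0:ℝ) ≤ m)]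
      have hpow : (0:ℝ) < (2:ℝ) ^ (m-1) := by positivity
      have hden : (2:ℝ) ^ (m-1) ≤ ((m:ℝ) + 1) * 2 ^ (m-1) * Real.Gamma ((m : ℝ)/2 + 1) := by
        have hA : (2:ℝ) ^ (m-1) ≤ ((m:ℝ) + 1) * 2 ^ (m-1) := by nlinarith
        have hB : ((m:ℝ) + 1) * 2 ^ (m-1) ≤ ((m:ℝ) + 1) * 2 ^ (m-1) * Real.Gamma ((m : ℝ)/2 + 1) :=
          le_mul_of_one_le_right (by positivity) hΓ
        linarith
      have h1 : Real.pi ^ ((m : ℝ)/2) / (((m:ℝ) + 1) * 2 ^ (m-1) * Real.Gamma ((m : ℝ)/2 + 1))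
          ≤ Real.pi ^ ((m : ℝ)/2) / (2:ℝ) ^ (m-1) :=
        div_le_div_of_nonneg_left (Real.rpow_pos_of_pos Real.pi_pos _).le hpow hden
      have h2 : Real.pi ^ ((m : ℝ)/2) / (2:ℝ) ^ (m-1) = 2 * (s/2) ^ m := by
        rw [pi_rpow_half_nat, ← hs_def]
        have hm' : m - 1 + 1 = m := by omega
        rw [div_pow, show (2:ℝ) ^ m = 2 * 2 ^ (m-1) by
          rw [← pow_succ', hm']]
        field_simp
      linarith
  have := ht.const_sub 1
  simpa using this

/-- With constant success probability `p = π^(n/2)/(2^n Γ(n/2+1))` (tight adaptive rectangular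
rejection sampling), the recursion converges to `c_min` linearly with rate
`ρ_n = 1 - π^(n/2)/((n+1) 2^(n-1) Γ(n/2+1))`, and `ρ_n → 1` as `n → ∞`. -/
theorem reject_sampling_recursion_rate (n : ℕ) (hn : 2 ≤ n) (cmin : ℝ) (hmin : 0 < cmin)
    (c : ℕ → ℝ) (h0 : cmin < c 0)
    (hrec : ∀ i, c (i + 1) =
      (Real.pi ^ ((n : ℝ) / 2) / (2 ^ n * Real.Gamma ((n : ℝ) / 2 + 1))) *
          (((n : ℝ) * (c i) ^ 2 + cmin ^ 2) / (((n : ℝ) + 1) * c i)) +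
        (1 - Real.pi ^ ((n : ℝ) / 2) / (2 ^ n * Real.Gamma ((n : ℝ) / 2 + 1))) * c i) :
    Tendsto c atTop (nhds cmin) ∧
      Tendsto (fun i => (c (i + 1) - cmin) / (c i - cmin)) atTop
        (nhds (1 - Real.pi ^ ((n : ℝ) / 2) /
          (((n : ℝ) + 1) * 2 ^ (n - 1) * Real.Gamma ((n : ℝ) / 2 + 1)))) ∧
      Tendsto (fun m : ℕ => 1 - Real.pi ^ ((m : ℝ) / 2) /
          (((m : ℝ) + 1) * 2 ^ (m - 1) * Real.Gamma ((m : ℝ) / 2 + 1)))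
        atTop (nhds 1) := by
  have hπ : (0:ℝ) < Real.pi := Real.pi_pos
  set p : ℝ := Real.pi ^ ((n:ℝ)/2) / (2 ^ n * Real.Gamma ((n:ℝ)/2 + 1)) with hp_def
  have hΓ1 : 1 ≤ Real.Gamma ((n:ℝ)/2 + 1) := by
    apply one_le_Gamma_aux
    have : (2:ℝ) ≤ (n:ℝ) := by exact_mod_cast hn
    linarith
  have hΓpos : 0 < Real.Gamma ((n:ℝ)/2 + 1) := by linarith
  have hp0 : 0 < p := div_pos (Real.rpow_pos_of_pos hπ _) (by positivity)
  have hp1 : p < 1 := by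
    rw [hp_def, div_lt_one (by positivity)]
    have hnum : Real.pi ^ ((n:ℝ)/2) < (2:ℝ) ^ n := by
      rw [pi_rpow_half_nat]
      exact pow_lt_pow_left₀ sqrtpi_lt_two
        (Real.rpow_pos_of_pos hπ _).le (by omega)
    calc Real.pi ^ ((n:ℝ)/2) < (2:ℝ)^n := hnum
      _ ≤ 2^n * Real.Gamma ((n:ℝ)/2 + 1) := by nlinarith [pow_pos (by norm_num : (0:ℝ) < 2) n]
  have hn1 : (0:ℝ) < (n:ℝ) + 1 := by positivity
  have hnn : (2:ℝ) ≤ (n:ℝ) := by exact_mod_cast hn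
  -- key recurrence identity
  have key : ∀ i, cmin < c i →
      c (i + 1) - cmin = (c i - cmin) * (1 - p * (c i + cmin) / (((n:ℝ) + 1) * c i)) := by
    intro i hi
    have hci : c i ≠ 0 := ne_of_gt (hmin.trans hi)
    rw [hrec i]
    field_simp
    ring
  set ρ : ℝ := 1 - 2 * p / ((n:ℝ) + 1) with hρ_def
  set q : ℝ := 1 - p / ((n:ℝ) + 1) with hq_def
  have hρ0 : 0 < ρ := by
    rw [hρ_def, sub_pos, div_lt_one hn1]
    linarith
  have hq1 : q < 1 := by
    rw [hq_def]
    have : 0 < p / ((n:ℝ) + 1) := div_pos hp0 hn1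
    linarith
  have hρq : ρ ≤ q := by
    rw [hρ_def, hq_def]
    have : p / ((n:ℝ)+1) ≤ 2 * p / ((n:ℝ)+1) := by
      rw [div_le_div_iff₀ hn1 hn1]
      nlinarith
    linarith
  have hq0 : 0 < q := lt_of_lt_of_le hρ0 hρq
  -- factor bounds
  have hfac : ∀ i, cmin < c i →
      ρ ≤ 1 - p * (c i + cmin) / (((n:ℝ) + 1) * c i) ∧
      1 - p * (c i + cmin) / (((n:ℝ) + 1) * c i) ≤ q := by
    intro i hi
    have hci : 0 < c i := hmin.trans hi
    constructor
    · rw [hρ_def]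
      have : p * (c i + cmin) / (((n:ℝ) + 1) * c i) ≤ 2 * p / ((n:ℝ) + 1) := by
        rw [div_le_div_iff₀ (by positivity) hn1]
        nlinarith [mul_nonneg (mul_pos hp0 hn1).le (sub_pos.2 hi).le]
      linarith
    · rw [hq_def]
      have : p / ((n:ℝ) + 1) ≤ p * (c i + cmin) / (((n:ℝ) + 1) * c i) := by
        rw [div_le_div_iff₀ hn1 (by positivity)]
        nlinarith [mul_nonneg (mul_pos hp0 hn1).le hmin.le]
      linarith
  -- positivity of c i - cmin
  have hpos : ∀ i, cmin < c i := by
    intro i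
    induction i with
    | zero => exact h0
    | succ k ih =>
      have hk := key k ih
      have hr := (hfac k ih).1
      have : 0 < c (k+1) - cmin := by
        rw [hk]
        exact mul_pos (sub_pos.2 ih) (lt_of_lt_of_le hρ0 hr)
      linarith
  -- geometric bound
  have hbound : ∀ i, c i - cmin ≤ (c 0 - cmin) * q ^ i := by
    intro i
    induction i with
    | zero => simp
    | succ k ih =>
      have hk := key k (hpos k)
      have hr := (hfac k (hpos k)).2
      have he : 0 ≤ c k - cmin := (sub_pos.2 (hpos k)).le
      calc c (k+1) - cmin = (c k - cmin) * (1 - p * (c k + cmin) / (((n:ℝ)+1) * c k)) := hk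
        _ ≤ (c k - cmin) * q := by
            apply mul_le_mul_of_nonneg_left hr he
        _ ≤ (c 0 - cmin) * q ^ k * q := by
            apply mul_le_mul_of_nonneg_right ih hq0.le
        _ = (c 0 - cmin) * q ^ (k+1) := by ring
  -- convergence of c
  have hsub : Tendsto (fun i => c i - cmin) atTop (nhds 0) := by
    have hgeo : Tendsto (fun i : ℕ => (c 0 - cmin) * q ^ i) atTop (nhds 0) := by
      have := tendsto_pow_atTop_nhds_zero_of_lt_one hq0.le hq1
      simpa using this.const_mul (c 0 - cmin)
    exact squeeze_zero (fun i => (sub_pos.2 (hpos i)).le) hbound hgeo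
  have hc : Tendsto c atTop (nhds cmin) := by
    have := hsub.add_const cmin
    simpa using this
  refine ⟨hc, ?_, rho_tendsto_one⟩
  -- the ratio tendsto
  have hlim : Tendsto (fun i => 1 - p * (c i + cmin) / (((n:ℝ)+1) * c i)) atTop
      (nhds (1 - p * (cmin + cmin) / (((n:ℝ)+1) * cmin))) := by
    apply Tendsto.const_sub
    apply Tendsto.div
    · exact (hc.add_const cmin).const_mul p
    · exact hc.const_mul _
    · positivity
  have hval : 1 - p * (cmin + cmin) / (((n:ℝ)+1) * cmin) =
      1 - Real.pi ^ ((n : ℝ) / 2) /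
        (((n : ℝ) + 1) * 2 ^ (n - 1) * Real.Gamma ((n : ℝ) / 2 + 1)) := by
    have h2n : (2:ℝ) ^ n = 2 * 2 ^ (n-1) := by
      rw [← pow_succ', show n - 1 + 1 = n by omega]
    rw [hp_def, h2n]
    have hpow : (0:ℝ) < (2:ℝ) ^ (n-1) := by positivity
    field_simp
    ring
  rw [← hval]
  apply hlim.congr
  intro i
  rw [key i (hpos i)]
  exact (mul_div_cancel_left₀ _ (sub_pos.2 (hpos i)).ne').symm
end

section
/- For every n ≥ 2, the ordering of best-case convergence rates holds: (n-1)/(n+1) ≤ 1 - π^(n/2)/((n+1)·2^(n-1)·Γ(n/2+1)) ≤ 1; i.e., the Informed RRT* rate (n-1)/(n+1) is at most the adaptive-rejection-sampling rate, which is at most the sublinear rate 1. -/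
open Real

lemma aux_key : ∀ n : ℕ, Real.pi ^ ((n : ℝ) / 2) ≤ 2 ^ n * Real.Gamma ((n : ℝ) / 2 + 1) := by
  intro n
  induction n using Nat.twoStepInduction with
  | zero => simp [Real.Gamma_one]
  | one =>
      have h1 : ((1:ℕ):ℝ) / 2 + 1 = 1/2 + 1 := by norm_num
      rw [h1, Real.Gamma_add_one (by norm_num), Real.Gamma_one_half_eq]
      have : Real.pi ^ (((1:ℕ):ℝ)/2) = Real.sqrt Real.pi := by
        rw [Real.sqrt_eq_rpow]; norm_num
      rw [this]; ring_nf; nlinarith [Real.sqrt_nonneg Real.pi]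
  | more n ih _ =>
      have hG : 0 < Real.Gamma ((n : ℝ) / 2 + 1) :=
        Real.Gamma_pos_of_pos (by positivity)
      have e1 : ((n + 2 : ℕ) : ℝ) / 2 = (n : ℝ) / 2 + 1 := by push_cast; ring
      rw [e1]
      have hpow : Real.pi ^ ((n : ℝ) / 2 + 1) = Real.pi ^ ((n : ℝ) / 2) * Real.pi := by
        rw [Real.rpow_add Real.pi_pos, Real.rpow_one]
      have hG2 : Real.Gamma ((n : ℝ) / 2 + 1 + 1) = ((n : ℝ) / 2 + 1) * Real.Gamma ((n : ℝ) / 2 + 1) := by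
        rw [Real.Gamma_add_one (by positivity)]
      rw [hpow, hG2]
      have hpi : Real.pi ≤ 4 := by linarith [Real.pi_le_four]
      have hp : (0:ℝ) < Real.pi ^ ((n : ℝ) / 2) := Real.rpow_pos_of_pos Real.pi_pos _
      have h4 : (2:ℝ) ^ (n + 2) = 4 * 2 ^ n := by ring
      rw [h4]
      have hn1 : (1:ℝ) ≤ (n : ℝ) / 2 + 1 := by have := Nat.cast_nonneg (α := ℝ) n; linarith
      nlinarith [mul_le_mul_of_nonneg_left hpi hp.le, ih, hG.le]

/-- For every `n ≥ 2`:
`(n-1)/(n+1) ≤ 1 - π^(n/2)/((n+1) 2^(n-1) Γ(n/2+1)) ≤ 1`. -/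
theorem convergence_rate_ordering (n : ℕ) (hn : 2 ≤ n) :
    ((n : ℝ) - 1) / ((n : ℝ) + 1) ≤
        1 - Real.pi ^ ((n : ℝ) / 2) /
          (((n : ℝ) + 1) * 2 ^ (n - 1) * Real.Gamma ((n : ℝ) / 2 + 1)) ∧
      1 - Real.pi ^ ((n : ℝ) / 2) /
          (((n : ℝ) + 1) * 2 ^ (n - 1) * Real.Gamma ((n : ℝ) / 2 + 1)) ≤ 1 := by
  have hG : 0 < Real.Gamma ((n : ℝ) / 2 + 1) := Real.Gamma_pos_of_pos (by positivity)
  have hp : (0:ℝ) < Real.pi ^ ((n : ℝ) / 2) := Real.rpow_pos_of_pos Real.pi_pos _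
  have hn1 : (0:ℝ) < (n : ℝ) + 1 := by positivity
  have hD : (0:ℝ) < ((n : ℝ) + 1) * 2 ^ (n - 1) * Real.Gamma ((n : ℝ) / 2 + 1) := by positivity
  constructor
  · have key := aux_key n
    have h2 : (2:ℝ) ^ n = 2 * 2 ^ (n - 1) := by
      rw [← pow_succ']
      congr 1
      omega
    rw [h2] at key
    have hle : Real.pi ^ ((n : ℝ) / 2) /
        (((n : ℝ) + 1) * 2 ^ (n - 1) * Real.Gamma ((n : ℝ) / 2 + 1)) ≤ 2 / ((n : ℝ) + 1) := by
      rw [div_le_div_iff₀ hD hn1]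
      nlinarith [key, hn1, hG, (by positivity : (0:ℝ) < (2:ℝ) ^ (n - 1))]
    have heq : ((n : ℝ) - 1) / ((n : ℝ) + 1) + 2 / ((n : ℝ) + 1) = 1 := by
      field_simp
      ring
    linarith
  · have : 0 ≤ Real.pi ^ ((n : ℝ) / 2) /
        (((n : ℝ) + 1) * 2 ^ (n - 1) * Real.Gamma ((n : ℝ) / 2 + 1)) := by positivity
    linarith
end
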